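/- Let q ≥ 4 be an integer and ε ∈ (0, 1/2]. Then for every rate R > log₂(q/2), the reliability function of the typewriter channel satisfies E(R) ≤ (1/2) log₂(1/α_ε). -/

import Mathlib

/-- The typewriter channel transition probabilities on `ZMod q`. -/
noncomputable def W (q : ℕ) (ε : ℝ) (y x : ZMod q) : ℝ :=
  if y = x then 1 - ε else if y = x + 1 then ε else 0

/-- `α_ε = √(ε(1-ε))`. -/
noncomputable def alphaE (ε : ℝ) : ℝ := Real.sqrt (ε * (1 - ε))

/-- The `n`-fold memoryless extension `Wⁿ(y|x) = ∏ₖ W(yₖ|xₖ)`. -/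
noncomputable def Wn (q : ℕ) [NeZero q] (n : ℕ) (ε : ℝ) (y x : Fin n → ZMod q) : ℝ :=
  ∏ k, W q ε (y k) (x k)

/-- `Pe(M,n)`: the smallest average error probability over all encoders
`f : Fin M → (ZMod q)ⁿ` and decoders `φ : (ZMod q)ⁿ → Fin M`. -/
noncomputable def Pe (q : ℕ) [NeZero q] (ε : ℝ) (M n : ℕ) : ℝ :=
  sInf {p : ℝ | ∃ f : Fin M → (Fin n → ZMod q), ∃ φ : (Fin n → ZMod q) → Fin M,
    p = (1 / M) * ∑ m : Fin M, ∑ y : Fin n → ZMod q,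
      if φ y = m then 0 else Wn q n ε y (f m)}

/-- The reliability function
`E(R) = limsup_{n→∞} (1/n) log₂ (1 / Pe(⌈2^{nR}⌉, n))`. -/
noncomputable def EReliability (q : ℕ) [NeZero q] (ε : ℝ) (R : ℝ) : ℝ :=
  Filter.limsup (fun n : ℕ =>
    (1 / (n : ℝ)) * Real.logb 2 (1 / Pe q ε (⌈(2 : ℝ) ^ ((n : ℝ) * R)⌉₊) n))
    Filter.atTop

/-- Binary entropy function (base 2), extended by `log 0 = 0`. -/
noncomputable def h2 (x : ℝ) : ℝ := -(x * Real.logb 2 x) - (1 - x) * Real.logb 2 (1 - x)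

/-!
Take any code and keep the half of its messages whose error probability is at most twice the
average. Averaging over translates, some cube `a + {0,1}ⁿ` contains a `(2/q)ⁿ` fraction of them,
and one weight class in that cube a further `1/(n+1)` fraction; at rates above `log₂(q/2)` at
least `1 + 1/δ` codewords remain, for any fixed `δ > 0`. By Plotkin's bound two of them, read as
binary words, are at Hamming distance `d ≤ (1+δ)n/2`. On the `d` coordinates where they differ,
each of the two inputs contributes as many factors `ε` as factors `1-ε` to the likelihood of the
output `a + 1`, so the two output distributions overlap in mass at least `α_εᵈ`, and a decoder
errs on one of the two messages on that overlap. Hence `Pe ≥ α_ε^{(1+δ)n/2} / 4`; let `δ → 0`.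
-/

open Finset Filter Topology

section Channel

variable {q : ℕ} {ε : ℝ}

lemma W_nonneg (hε₀ : 0 ≤ ε) (hε₁ : ε ≤ 1) (y x : ZMod q) : 0 ≤ W q ε y x := by
  unfold W
  split_ifs <;> linarith

lemma W_add_one [Fact (1 < q)] (a : ZMod q) (b : Bool) :
    W q ε (a + 1) (a + if b then 1 else 0) = if b then 1 - ε else ε := by
  cases b <;> simp [W]

variable [NeZero q]

lemma Wn_nonneg (hε₀ : 0 ≤ ε) (hε₁ : ε ≤ 1) {n : ℕ} (y x : Fin n → ZMod q) :
    0 ≤ Wn q n ε y x :=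
  prod_nonneg fun _ _ => W_nonneg hε₀ hε₁ _ _

variable [Fact (1 < q)]

lemma sum_W (x : ZMod q) : ∑ y, W q ε y x = 1 := by
  have hW : ∀ y, W q ε y x = (if y = x then 1 - ε else 0) + if y = x + 1 then ε else 0 := by
    intro y
    unfold W
    split_ifs <;> simp_all
  simp [hW, sum_add_distrib]

lemma sum_Wn {n : ℕ} (x : Fin n → ZMod q) : ∑ y, Wn q n ε y x = 1 := by
  simp only [Wn, ← Fintype.prod_sum fun k b => W q ε b (x k), sum_W, prod_const_one]

lemma le_sum_min_Wn (hε₀ : 0 ≤ ε) (hε₁ : ε ≤ 1) {n : ℕ} {x₁ x₂ z : Fin n → ZMod q}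
    (E : Finset (Fin n)) (hE : ∀ k ∉ E, x₁ k = x₂ k) {p : ℝ}
    (h₁ : ∏ k ∈ E, W q ε (z k) (x₁ k) = p) (h₂ : ∏ k ∈ E, W q ε (z k) (x₂ k) = p) :
    p ≤ ∑ y, min (Wn q n ε y x₁) (Wn q n ε y x₂) := by
  -- `∏ₖ g k (y k)` is a probability distribution on outputs, concentrated on `y = z` over `E`,
  -- and `p` times it lies below both likelihoods.
  set g : Fin n → ZMod q → ℝ :=
    fun k b => if k ∈ E then (if b = z k then 1 else 0) else W q ε b (x₁ k)
  have hg : ∑ y : Fin n → ZMod q, ∏ k, g k (y k) = 1 := by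
    rw [← Fintype.prod_sum g]
    refine prod_eq_one fun k _ => ?_
    by_cases hk : k ∈ E <;> simp [g, hk, sum_W]
  have hle : ∀ x, (∀ k ∉ E, x k = x₁ k) → ∏ k ∈ E, W q ε (z k) (x k) = p →
      ∀ y, p * ∏ k, g k (y k) ≤ Wn q n ε y x := by
    intro x hx hp y
    by_cases hy : ∀ k ∈ E, y k = z k
    · have hgy : ∏ k, g k (y k) = ∏ k ∈ Eᶜ, W q ε (y k) (x k) := by
        rw [← prod_mul_prod_compl E, prod_eq_one fun k hk => by simp [g, hk, hy k hk], one_mul]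
        exact prod_congr rfl fun k hk => by simp [g, mem_compl.mp hk, hx k (mem_compl.mp hk)]
      rw [hgy, Wn, ← prod_mul_prod_compl E, ← hp]
      exact le_of_eq (congrArg (· * _) (prod_congr rfl fun k hk => by rw [hy k hk]))
    · push Not at hy
      obtain ⟨k, hk, hyk⟩ := hy
      rw [prod_eq_zero (mem_univ k) (by simp [g, hk, hyk]), mul_zero]
      exact Wn_nonneg hε₀ hε₁ y x
  calc p = ∑ y, p * ∏ k, g k (y k) := by rw [← mul_sum, hg, mul_one]
    _ ≤ ∑ y, min (Wn q n ε y x₁) (Wn q n ε y x₂) :=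
      sum_le_sum fun y _ => le_min (hle x₁ (fun _ _ => rfl) h₁ y)
        (hle x₂ (fun k hk => (hE k hk).symm) h₂ y)

end Channel

lemma sum_min_le_add_of_ne {Y ι : Type*} [Fintype Y] [DecidableEq ι] {P₁ P₂ : Y → ℝ}
    (hP₂ : ∀ y, 0 ≤ P₂ y) (φ : Y → ι) {m₁ m₂ : ι} (hm : m₁ ≠ m₂) :
    ∑ y, min (P₁ y) (P₂ y) ≤
      (∑ y, if φ y = m₁ then 0 else P₁ y) + ∑ y, if φ y = m₂ then 0 else P₂ y := by
  rw [← sum_add_distrib]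
  gcongr with y
  by_cases hy : φ y = m₁
  · simp [hy, hm]
  · have : 0 ≤ if φ y = m₂ then 0 else P₂ y := by split_ifs <;> simp [hP₂ y]
    simpa [hy] using le_add_of_le_of_nonneg (min_le_left _ _) this

lemma card_le_two_mul_card_filter {ι : Type*} (s : Finset ι) {g : ι → ℝ}
    (hg : ∀ i ∈ s, 0 ≤ g i) : #s ≤ 2 * #{i ∈ s | g i * #s ≤ 2 * ∑ j ∈ s, g j} := by
  have hsplit := card_filter_add_card_filter_not (s := s) (fun i => g i * #s ≤ 2 * ∑ j ∈ s, g j)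
  set B := {i ∈ s | ¬ g i * #s ≤ 2 * ∑ j ∈ s, g j}
  suffices 2 * #B ≤ #s by omega
  rcases B.eq_empty_or_nonempty with hB | hB
  · simp [hB]
  have hlt : ∑ _i ∈ B, 2 * ∑ j ∈ s, g j < ∑ i ∈ B, g i * #s :=
    sum_lt_sum_of_nonempty hB fun i hi => not_le.mp (mem_filter.mp hi).2
  have hBs : ∑ i ∈ B, g i ≤ ∑ i ∈ s, g i :=
    sum_le_sum_of_subset_of_nonneg (filter_subset _ _) fun i hi _ => hg i hi
  rw [sum_const, nsmul_eq_mul, ← sum_mul] at hlt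
  have hsum : 0 ≤ ∑ i ∈ s, g i := sum_nonneg hg
  have : (2 * #B : ℝ) < #s := by nlinarith
  exact_mod_cast this.le

lemma exists_card_mul_le_card_filter_sub_mem {G ι : Type*} [AddCommGroup G] [Fintype G]
    [DecidableEq G] (C : Finset G) (S : Finset ι) (f : ι → G) :
    ∃ a : G, #S * #C ≤ Fintype.card G * #{m ∈ S | f m - a ∈ C} := by
  have hfiber : ∀ m, ∑ a, (if f m - a ∈ C then 1 else 0) = #C := fun m =>
    (Fintype.sum_equiv (Equiv.subLeft (f m)) _ (fun b => if b ∈ C then 1 else 0)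
      fun _ => rfl).trans (by simp)
  have hcount : ∑ a, #{m ∈ S | f m - a ∈ C} = #S * #C := by
    simp only [card_filter]
    rw [sum_comm]
    simp [hfiber]
  obtain ⟨a, -, ha⟩ := exists_le_of_sum_le univ_nonempty
    (f := fun _ => #S * #C) (g := fun a => Fintype.card G * #{m ∈ S | f m - a ∈ C})
    (by rw [sum_const, card_univ, smul_eq_mul, ← mul_sum, hcount])
  exact ⟨a, ha⟩

lemma two_mul_sum_sum_ne_le_sq {ι : Type*} (T : Finset ι) (g : ι → Bool) :
    2 * ∑ i ∈ T, ∑ j ∈ T, (if g i ≠ g j then 1 else 0 : ℝ) ≤ (#T : ℝ) ^ 2 := by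
  have hAB := card_filter_add_card_filter_not (s := T) (fun i => g i = true)
  have hinner : ∀ i, ∑ j ∈ T, (if g i ≠ g j then 1 else 0 : ℝ) =
      if g i then (#{j ∈ T | ¬ g j = true} : ℝ) else #{j ∈ T | g j = true} := by
    intro i
    rw [sum_boole]
    cases g i <;> simp
  rw [sum_congr rfl fun i _ => hinner i, sum_ite, sum_const, sum_const, nsmul_eq_mul,
    nsmul_eq_mul, ← hAB]
  push_cast
  nlinarith [sq_nonneg ((#{j ∈ T | g j = true} : ℝ) - #{j ∈ T | ¬ g j = true})]

-- Plotkin's bound, by averaging the distance over distinct pairs.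
lemma exists_two_mul_hammingDist_le {ι : Type*} [DecidableEq ι] {n : ℕ} (T : Finset ι)
    (c : ι → Fin n → Bool) (hT : 2 ≤ #T) :
    ∃ m₁ ∈ T, ∃ m₂ ∈ T, m₁ ≠ m₂ ∧ 2 * ((#T : ℝ) - 1) * hammingDist (c m₁) (c m₂) ≤ n * #T := by
  set D : ι × ι → ℝ := fun p => hammingDist (c p.1) (c p.2)
  have hsum : 2 * ∑ p ∈ T ×ˢ T, D p ≤ n * #T ^ 2 := by
    calc 2 * ∑ p ∈ T ×ˢ T, D p
        = ∑ k, 2 * ∑ i ∈ T, ∑ j ∈ T, (if c i k ≠ c j k then 1 else 0 : ℝ) := by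
          simp only [D, sum_product, hammingDist, card_filter]
          push_cast
          rw [← mul_sum]
          exact congrArg _ ((sum_congr rfl fun _ _ => sum_comm).trans sum_comm)
      _ ≤ ∑ _k : Fin n, (#T : ℝ) ^ 2 := sum_le_sum fun k _ => two_mul_sum_sum_ne_le_sq T (c · k)
      _ = n * #T ^ 2 := by simp
  have hoff : ∑ p ∈ T.offDiag, D p = ∑ p ∈ T ×ˢ T, D p :=
    sum_subset (fun p hp => by simp_all [mem_offDiag]) fun p hp hoff => by
      simp_all [mem_offDiag, D]
  have hcard : (#T.offDiag : ℝ) = #T * (#T - 1) := by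
    rw [offDiag_card, Nat.cast_sub (Nat.le_mul_self _)]
    push_cast
    ring
  obtain ⟨a, ha, b, hb, hab⟩ := one_lt_card.mp hT
  have ht : (1 : ℝ) ≤ #T := by exact_mod_cast hT.trans' one_le_two
  obtain ⟨p, hp, hle⟩ := exists_le_of_sum_le ⟨(a, b), mem_offDiag.mpr ⟨ha, hb, hab⟩⟩
    (f := fun p => 2 * ((#T : ℝ) - 1) * D p) (g := fun _ => n * #T) <| by
      rw [← mul_sum, hoff, sum_const, nsmul_eq_mul, hcard]
      nlinarith [mul_le_mul_of_nonneg_left hsum (sub_nonneg.mpr ht)]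
  obtain ⟨h₁, h₂, hne⟩ := mem_offDiag.mp hp
  exact ⟨p.1, h₁, p.2, h₂, hne, hle⟩

lemma exists_hammingDist_le_of_one_add_inv_le_card {ι : Type*} [DecidableEq ι] {n : ℕ}
    (T : Finset ι) (c : ι → Fin n → Bool) {δ : ℝ} (hδ : 0 < δ) (hT : 1 + δ⁻¹ ≤ #T) :
    ∃ m₁ ∈ T, ∃ m₂ ∈ T, m₁ ≠ m₂ ∧ (hammingDist (c m₁) (c m₂) : ℝ) ≤ (1 + δ) * n / 2 := by
  have hT₂ : 2 ≤ #T := by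
    have : (1 : ℝ) < #T := by linarith [inv_pos.mpr hδ]
    exact_mod_cast this
  obtain ⟨m₁, hm₁, m₂, hm₂, hne, hd⟩ := exists_two_mul_hammingDist_le T c hT₂
  refine ⟨m₁, hm₁, m₂, hm₂, hne, ?_⟩
  have hδT : 1 ≤ δ * (#T - 1) := by
    simpa [mul_inv_cancel₀ hδ.ne'] using mul_le_mul_of_nonneg_left (le_sub_iff_add_le'.mpr hT) hδ.le
  refine le_of_mul_le_mul_left ?_ (by linarith [inv_pos.mpr hδ] : (0 : ℝ) < 2 * (#T - 1))
  nlinarith [mul_le_mul_of_nonneg_left hδT (Nat.cast_nonneg n : (0 : ℝ) ≤ n)]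

section Cube

variable {q n : ℕ}

def cubeVertex (c : Fin n → Bool) : Fin n → ZMod q := fun k => if c k then 1 else 0

lemma cubeVertex_injective [Fact (1 < q)] :
    Function.Injective (cubeVertex : (Fin n → Bool) → Fin n → ZMod q) := by
  intro c c' h
  funext k
  have := congrFun h k
  cases hc : c k <;> cases hc' : c' k <;> simp_all [cubeVertex]

lemma card_filter_ne_filter_eq_of_card_eq (c c' : Fin n → Bool)
    (hw : #{k | c k} = #{k | c' k}) :
    #{k ∈ {k | c k ≠ c' k} | c k} = #{k ∈ {k | c k ≠ c' k} | ¬ c k} := by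
  have key : ∀ k, ((if c k ≠ c' k ∧ c k then 1 else 0 : ℤ) - if c k ≠ c' k ∧ ¬ c k then 1 else 0)
      = (if c k then 1 else 0) - if c' k then 1 else 0 := by
    intro k
    cases c k <;> cases c' k <;> rfl
  rw [filter_filter, filter_filter]
  zify at hw ⊢
  simp only [card_filter] at hw ⊢
  push_cast at hw ⊢
  rw [← sub_eq_zero, ← sum_sub_distrib, sum_congr rfl fun k _ => key k, sum_sub_distrib, hw,
    sub_self]

lemma prod_W_cubeVertex [Fact (1 < q)] {ε : ℝ} (hε₀ : 0 ≤ ε) (hε₁ : ε ≤ 1)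
    (a : Fin n → ZMod q) (c c' : Fin n → Bool) (hw : #{k | c k} = #{k | c' k}) :
    ∏ k ∈ {k | c k ≠ c' k}, W q ε (a k + 1) ((a + cubeVertex c : Fin n → ZMod q) k) =
      alphaE ε ^ hammingDist c c' := by
  have hsplit := card_filter_add_card_filter_not (s := {k | c k ≠ c' k}) (fun k => c k = true)
  simp only [Pi.add_apply, cubeVertex, W_add_one]
  rw [prod_ite, prod_const, prod_const, ← card_filter_ne_filter_eq_of_card_eq c c' hw,
    hammingDist, ← hsplit, ← card_filter_ne_filter_eq_of_card_eq c c' hw, alphaE, ← two_mul,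
    pow_mul, Real.sq_sqrt (mul_nonneg hε₀ (sub_nonneg.mpr hε₁)), mul_pow, mul_comm]

lemma exists_constant_weight_subcube [NeZero q] [Fact (1 < q)] {ι : Type*}
    (f : ι → Fin n → ZMod q) (S : Finset ι) :
    ∃ (a : Fin n → ZMod q) (c : ι → Fin n → Bool) (T : Finset ι), T ⊆ S ∧
      (#S : ℝ) * 2 ^ n ≤ (n + 1) * q ^ n * #T ∧
      ∀ m ∈ T, f m = a + cubeVertex (c m) ∧ ∀ m' ∈ T, #{k | c m k} = #{k | c m' k} := by
  classical
  set C : Finset (Fin n → ZMod q) := univ.image cubeVertex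
  have hC : #C = 2 ^ n := by
    rw [card_image_of_injective _ cubeVertex_injective]
    simp
  obtain ⟨a, ha⟩ := exists_card_mul_le_card_filter_sub_mem C S f
  set T₀ := {m ∈ S | f m - a ∈ C}
  set c : ι → Fin n → Bool := fun m => Function.invFun cubeVertex (f m - a)
  have hc : ∀ m ∈ T₀, f m = a + cubeVertex (c m) := by
    intro m hm
    have : ∃ b, cubeVertex b = f m - a := by simpa [C] using (mem_filter.mp hm).2
    rw [Function.invFun_eq this, add_sub_cancel]
  obtain ⟨w, -, hw⟩ := exists_le_card_fiber_of_nsmul_le_card_of_maps_to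
    (s := T₀) (t := range (n + 1)) (f := fun m => #{k | c m k}) (b := (#T₀ : ℝ) / (n + 1))
    (fun m _ => mem_range.mpr (Nat.lt_succ_of_le ((card_le_univ _).trans (Fintype.card_fin n).le)))
    nonempty_range_add_one (by rw [card_range, nsmul_eq_mul]; push_cast; field_simp; rfl)
  refine ⟨a, c, {m ∈ T₀ | #{k | c m k} = w}, fun m hm => (mem_filter.mp (mem_filter.mp hm).1).1,
    ?_, fun m hm => ⟨hc m (mem_filter.mp hm).1, fun m' hm' => ?_⟩⟩
  · have hcard : Fintype.card (Fin n → ZMod q) = q ^ n := by simp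
    rw [hC, hcard] at ha
    have ha' : (#S : ℝ) * 2 ^ n ≤ q ^ n * #T₀ := by exact_mod_cast ha
    rw [div_le_iff₀ (by positivity)] at hw
    nlinarith [mul_le_mul_of_nonneg_left hw (pow_nonneg q.cast_nonneg n : (0 : ℝ) ≤ q ^ n)]
  · rw [(mem_filter.mp hm).2, (mem_filter.mp hm').2]

end Cube

noncomputable def msgError (q : ℕ) [NeZero q] (ε : ℝ) {n M : ℕ} (f : Fin M → Fin n → ZMod q)
    (φ : (Fin n → ZMod q) → Fin M) (m : Fin M) : ℝ :=
  ∑ y, if φ y = m then 0 else Wn q n ε y (f m)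

section Code

variable {q n M : ℕ} [NeZero q] {ε : ℝ} {f : Fin M → Fin n → ZMod q}
  {φ : (Fin n → ZMod q) → Fin M}

lemma msgError_nonneg (hε₀ : 0 ≤ ε) (hε₁ : ε ≤ 1) (m : Fin M) : 0 ≤ msgError q ε f φ m :=
  sum_nonneg fun y _ => by split_ifs <;> simp [Wn_nonneg hε₀ hε₁]

variable [Fact (1 < q)]

lemma msgError_le_one (hε₀ : 0 ≤ ε) (hε₁ : ε ≤ 1) (m : Fin M) : msgError q ε f φ m ≤ 1 := by
  refine (sum_le_sum fun y _ => ?_).trans_eq (sum_Wn (ε := ε) (f m))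
  split_ifs <;> simp [Wn_nonneg hε₀ hε₁]

lemma alphaE_pow_le_msgError_add (hε₀ : 0 ≤ ε) (hε₁ : ε ≤ 1) {m₁ m₂ : Fin M} (hne : m₁ ≠ m₂)
    {a : Fin n → ZMod q} {c₁ c₂ : Fin n → Bool} (hf₁ : f m₁ = a + cubeVertex c₁)
    (hf₂ : f m₂ = a + cubeVertex c₂) (hw : #{k | c₁ k} = #{k | c₂ k}) :
    alphaE ε ^ hammingDist c₁ c₂ ≤ msgError q ε f φ m₁ + msgError q ε f φ m₂ := by
  have h₂ := prod_W_cubeVertex hε₀ hε₁ a c₂ c₁ hw.symm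
  simp only [ne_comm (a := c₂ _), hammingDist_comm c₂] at h₂
  refine (le_sum_min_Wn hε₀ hε₁ (z := fun k => a k + 1) {k | c₁ k ≠ c₂ k} ?_ (hf₁ ▸ ?_)
    (hf₂ ▸ h₂)).trans (sum_min_le_add_of_ne (Wn_nonneg hε₀ hε₁ · _) φ hne)
  · intro k hk
    simp_all [cubeVertex]
  · exact prod_W_cubeVertex hε₀ hε₁ a c₁ c₂ hw

lemma alphaE_rpow_le_four_mul_avg_msgError (hε₀ : 0 ≤ ε) (hε₁ : ε ≤ 1) {δ : ℝ} (hδ : 0 < δ)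
    (hM : 2 * (1 + δ⁻¹) * (n + 1) * ((q : ℝ) / 2) ^ n ≤ M) :
    alphaE ε ^ ((1 + δ) * n / 2) ≤ 4 * ((1 / M) * ∑ m, msgError q ε f φ m) := by
  have hq : (0 : ℝ) < q := by exact_mod_cast NeZero.pos q
  set err := msgError q ε f φ
  set S : Finset (Fin M) := {m | err m * M ≤ 2 * ∑ j, err j}
  have hS : M ≤ 2 * #S := by
    simpa using card_le_two_mul_card_filter univ fun m _ => msgError_nonneg hε₀ hε₁ m
  obtain ⟨a, c, T, hTS, hT, hcube⟩ := exists_constant_weight_subcube f S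
  have hTcard : 1 + δ⁻¹ ≤ #T := by
    have hS' : (M : ℝ) ≤ 2 * #S := by exact_mod_cast hS
    rw [div_pow, mul_div_assoc', div_le_iff₀ (by positivity)] at hM
    have h2S := mul_le_mul_of_nonneg_right hS' (pow_nonneg zero_le_two n)
    refine le_of_mul_le_mul_left ?_ (by positivity : (0 : ℝ) < 2 * (n + 1) * q ^ n)
    linarith
  obtain ⟨m₁, hm₁, m₂, hm₂, hne, hdist⟩ := exists_hammingDist_le_of_one_add_inv_le_card T c hδ hTcard
  obtain ⟨hf₁, hw⟩ := hcube m₁ hm₁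
  have hpair : alphaE ε ^ hammingDist (c m₁) (c m₂) ≤ err m₁ + err m₂ :=
    alphaE_pow_le_msgError_add hε₀ hε₁ hne hf₁ (hcube m₂ hm₂).1 (hw m₂ hm₂)
  have hfour : err m₁ + err m₂ ≤ 4 * ((1 / M) * ∑ m, err m) := by
    have hM0 : (0 : ℝ) < M := lt_of_lt_of_le (by positivity) hM
    have h₁ := (mem_filter.mp (hTS hm₁)).2
    have h₂ := (mem_filter.mp (hTS hm₂)).2
    rw [show 4 * ((1 / M) * ∑ m, err m) = (4 * ∑ m, err m) / M by ring, le_div_iff₀ hM0]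
    linarith
  have hα₁ : alphaE ε ≤ 1 := Real.sqrt_le_one.mpr (by nlinarith)
  calc alphaE ε ^ ((1 + δ) * n / 2)
      ≤ alphaE ε ^ hammingDist (c m₁) (c m₂) := by
        rw [← Real.rpow_natCast]
        exact Real.rpow_le_rpow_of_exponent_ge' (Real.sqrt_nonneg _) hα₁ (Nat.cast_nonneg _) hdist
    _ ≤ err m₁ + err m₂ := hpair
    _ ≤ _ := hfour

end Code

section Pe

variable {q n M : ℕ} [NeZero q] [Fact (1 < q)] {ε : ℝ}

lemma Pe_le_one (hε₀ : 0 ≤ ε) (hε₁ : ε ≤ 1) (hM : 0 < M) : Pe q ε M n ≤ 1 := by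
  refine csInf_le_of_le ⟨0, ?_⟩ ⟨fun _ _ => 0, fun _ => ⟨0, hM⟩, rfl⟩ ?_
  · rintro p ⟨f, φ, rfl⟩
    exact mul_nonneg (by positivity)
      (sum_nonneg fun m _ => msgError_nonneg (f := f) (φ := φ) hε₀ hε₁ m)
  · calc _ ≤ (1 / M) * ∑ _m : Fin M, (1 : ℝ) := by
          gcongr with m
          exact msgError_le_one (q := q) (n := n) (f := fun _ _ => 0) (φ := fun _ => ⟨0, hM⟩)
            hε₀ hε₁ m
      _ = 1 := by simp [hM.ne']

lemma alphaE_rpow_div_four_le_Pe (hε₀ : 0 ≤ ε) (hε₁ : ε ≤ 1) {δ : ℝ} (hδ : 0 < δ)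
    (hM : 2 * (1 + δ⁻¹) * (n + 1) * ((q : ℝ) / 2) ^ n ≤ M) :
    alphaE ε ^ ((1 + δ) * n / 2) / 4 ≤ Pe q ε M n := by
  have hq : (0 : ℝ) < q := by exact_mod_cast NeZero.pos q
  have hM0 : 0 < M := Nat.cast_pos.mp (lt_of_lt_of_le (by positivity) hM)
  refine le_csInf ⟨_, fun _ _ => 0, fun _ => ⟨0, hM0⟩, rfl⟩ ?_
  rintro p ⟨f, φ, rfl⟩
  exact (div_le_iff₀' four_pos).mpr
    (alphaE_rpow_le_four_mul_avg_msgError (f := f) (φ := φ) hε₀ hε₁ hδ hM)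

end Pe

lemma eventually_mul_pow_le_two_rpow {b R : ℝ} (hb : 0 < b) (hR : Real.logb 2 b < R) (C : ℝ) :
    ∀ᶠ n : ℕ in atTop, C * (n + 1) * b ^ n ≤ (2 : ℝ) ^ (n * R) := by
  have hρ : 1 < (2 : ℝ) ^ R / b := by
    rw [one_lt_div hb]
    exact (Real.logb_lt_iff_lt_rpow one_lt_two hb).mp hR
  have ho : (fun n : ℕ => C * ((n : ℝ) + 1)) =o[atTop] fun n => ((2 : ℝ) ^ R / b) ^ n := by
    simpa using ((isLittleO_pow_const_const_pow_of_one_lt 1 hρ).add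
      (isLittleO_pow_const_const_pow_of_one_lt 0 hρ)).const_mul_left C
  filter_upwards [ho.bound one_pos] with n hn
  rw [Real.norm_eq_abs, Real.norm_eq_abs, one_mul,
    abs_of_pos (show 0 < ((2 : ℝ) ^ R / b) ^ n by positivity)] at hn
  calc C * (n + 1) * b ^ n ≤ ((2 : ℝ) ^ R / b) ^ n * b ^ n :=
        mul_le_mul_of_nonneg_right ((le_abs_self _).trans hn) (by positivity)
    _ = (2 : ℝ) ^ (n * R) := by
        rw [← mul_pow, div_mul_cancel₀ _ hb.ne', mul_comm, Real.rpow_mul zero_le_two,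
          Real.rpow_natCast]

lemma logb_one_div_le_of_rpow_div_four_le {a P e : ℝ} (ha : 0 < a) (h : a ^ e / 4 ≤ P) :
    Real.logb 2 (1 / P) ≤ 2 + e * Real.logb 2 (1 / a) := by
  have hP : 0 < P := lt_of_lt_of_le (by positivity) h
  calc Real.logb 2 (1 / P) ≤ Real.logb 2 (2 ^ (2 : ℝ) * (1 / a) ^ e) := by
        refine Real.logb_le_logb_of_le one_lt_two (by positivity) ?_
        rw [Real.div_rpow zero_le_one ha.le, Real.one_rpow, mul_one_div,
          div_le_div_iff₀ hP (by positivity)]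
        norm_num
        linarith
    _ = 2 + e * Real.logb 2 (1 / a) := by
        rw [Real.logb_mul (by positivity) (by positivity), Real.logb_rpow two_pos one_lt_two.ne',
          Real.logb_rpow_eq_mul_logb_of_pos (by positivity)]

lemma logb_one_div_Pe_le {q n M : ℕ} [NeZero q] [Fact (1 < q)] {ε : ℝ} (hε₀ : 0 < ε)
    (hε₁ : ε < 1) {δ : ℝ} (hδ : 0 < δ) (hM : 2 * (1 + δ⁻¹) * (n + 1) * ((q : ℝ) / 2) ^ n ≤ M) :
    0 ≤ Real.logb 2 (1 / Pe q ε M n) ∧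
      Real.logb 2 (1 / Pe q ε M n) ≤ 2 + (1 + δ) * n / 2 * Real.logb 2 (1 / alphaE ε) := by
  have hq : (0 : ℝ) < q := by exact_mod_cast NeZero.pos q
  have hα : 0 < alphaE ε := Real.sqrt_pos.mpr (by nlinarith)
  have hM0 : 0 < M := Nat.cast_pos.mp (lt_of_lt_of_le (by positivity) hM)
  have hlow := alphaE_rpow_div_four_le_Pe hε₀.le hε₁.le hδ hM
  have hPe : 0 < Pe q ε M n := lt_of_lt_of_le (by positivity) hlow
  exact ⟨Real.logb_nonneg one_lt_two (one_le_one_div hPe (Pe_le_one hε₀.le hε₁.le hM0)),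
    logb_one_div_le_of_rpow_div_four_le hα hlow⟩

lemma limsup_le_of_forall_pos_eventually_le {u : ℕ → ℝ} {C E : ℝ}
    (h : ∀ δ > 0, ∀ᶠ n : ℕ in atTop, 0 ≤ u n ∧ u n ≤ C / n + (1 + δ) * E) :
    limsup u atTop ≤ E := by
  have hlimsup : ∀ δ > 0, limsup u atTop ≤ (1 + δ) * E := by
    intro δ hδ
    have hv : Tendsto (fun n : ℕ => C / (n : ℝ) + (1 + δ) * E) atTop (𝓝 ((1 + δ) * E)) := by
      simpa using (tendsto_const_div_atTop_nhds_zero_nat C).add_const ((1 + δ) * E)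
    calc limsup u atTop ≤ limsup (fun n : ℕ => C / (n : ℝ) + (1 + δ) * E) atTop :=
          limsup_le_limsup ((h δ hδ).mono fun _ h => h.2)
            (isCoboundedUnder_le_of_eventually_le _ ((h δ hδ).mono fun _ h => h.1))
            hv.isBoundedUnder_le
      _ = (1 + δ) * E := hv.limsup_eq
  have hE : Tendsto (fun δ : ℝ => (1 + δ) * E) (𝓝[>] 0) (𝓝 E) := by
    have hcont : Continuous fun δ : ℝ => (1 + δ) * E := by fun_prop
    exact tendsto_nhdsWithin_of_tendsto_nhds (by simpa using hcont.tendsto 0)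
  exact ge_of_tendsto hE (eventually_mem_nhdsWithin.mono hlimsup)

theorem stmt7 (q : ℕ) [NeZero q] (hq : 4 ≤ q)
    (ε : ℝ) (hε : 0 < ε) (hε' : ε ≤ 1 / 2)
    (R : ℝ) (hR : Real.logb 2 ((q : ℝ) / 2) < R) :
    EReliability q ε R ≤ (1 / 2) * Real.logb 2 (1 / alphaE ε) := by
  have : Fact (1 < q) := ⟨by omega⟩
  unfold EReliability
  refine limsup_le_of_forall_pos_eventually_le (C := 2) fun δ hδ => ?_
  filter_upwards [eventually_mul_pow_le_two_rpow (by positivity) hR (2 * (1 + δ⁻¹)),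
    eventually_gt_atTop 0] with n hn hn₀
  obtain ⟨hnonneg, hle⟩ := logb_one_div_Pe_le hε (by linarith) hδ (hn.trans (Nat.le_ceil _))
  refine ⟨mul_nonneg (by positivity) hnonneg, ?_⟩
  calc _ ≤ 1 / (n : ℝ) * (2 + (1 + δ) * n / 2 * Real.logb 2 (1 / alphaE ε)) := by gcongr
    _ = 2 / n + (1 + δ) * (1 / 2 * Real.logb 2 (1 / alphaE ε)) := by field_simp
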